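/- Let G : Z → Z be (1/L)-co-coercive and let {z^k} be generated by the inexact Halpern iteration with β_k = 1/(k+2), η_k = (1-β_k)/L, and inexactness ‖G(z^k) - \tilde{z}^k‖ ≤ γ_k. If z* satisfies G(z*) = 0, then for all k ≥ 0, ‖z^{k+1} - z^k‖² ≤ 8(7L‖z^0 - z*‖ + 11√(Σ_{i=0}^{k}(i+1)²γ_i²))² / (L²(k+1)(k+2)). -/

import Mathlib

/-!
With `r k = (k + 1) ‖G zₖ‖`, the quantity
`Vₖ = k (k + 1) ‖G zₖ‖² + 2 L (k + 1) ⟪G zₖ, zₖ - z₀⟫` does not increase along the exact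
Halpern iteration, and an error of size `γₖ` raises it by at most
`(k + 1)² γₖ² + 2 γₖ r (k + 1)`. Co-coercivity at `z*` bounds `Vₖ` from below, which gives
`(r k)² ≤ 2 L ‖z₀ - z*‖ r k + Sₖ + 2 ∑_{i<k} γᵢ r (i + 1)` with `Sₖ = ∑_{i<k} (i + 1)² γᵢ²`.
Evaluated at the largest `r i`, `i ≤ k`, together with `(∑_{i<k} γᵢ)² ≤ 2 Sₖ` (Cauchy–Schwarz
against `∑ 1/(i + 1)² ≤ 2`), this yields `r k ≤ 6 (L ‖z₀ - z*‖ + √Sₖ)`. The recursion then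
shows that `L (k + 1) ‖zₖ - z₀‖` grows at most linearly in `k`, and
`L (k + 2) (zₖ₊₁ - zₖ) = -(L (zₖ - z₀) + (k + 1) z̃ₖ)` turns both bounds into the
`O(1/k)` rate for `‖zₖ₊₁ - zₖ‖`.
-/

open Finset
open scoped RealInnerProductSpace

def weightedSqSum (γ : ℕ → ℝ) (n : ℕ) : ℝ := ∑ i ∈ range n, ((i : ℝ) + 1) ^ 2 * γ i ^ 2

lemma weightedSqSum_nonneg (γ : ℕ → ℝ) (n : ℕ) : 0 ≤ weightedSqSum γ n :=
  sum_nonneg fun _ _ ↦ by positivity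

lemma weightedSqSum_mono (γ : ℕ → ℝ) : Monotone (weightedSqSum γ) := fun _ _ h ↦
  sum_le_sum_of_subset_of_nonneg (range_subset_range.2 h) fun _ _ _ ↦ by positivity

lemma mul_le_sqrt_weightedSqSum (γ : ℕ → ℝ) (j : ℕ) :
    ((j : ℝ) + 1) * γ j ≤ √(weightedSqSum γ (j + 1)) := by
  refine (le_abs_self _).trans (Real.abs_le_sqrt ?_)
  rw [mul_pow]
  exact single_le_sum (f := fun i : ℕ ↦ ((i : ℝ) + 1) ^ 2 * γ i ^ 2) (fun _ _ ↦ by positivity)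
    (self_mem_range_succ j)

lemma sum_range_inv_succ_sq_le_two (n : ℕ) : ∑ i ∈ range n, (((i : ℝ) + 1) ^ 2)⁻¹ ≤ 2 := by
  have h := sum_Ioo_inv_sq_le (α := ℝ) 0 (n + 1)
  rw [← Finset.Ico_add_one_left_eq_Ioo, sum_Ico_eq_sum_range] at h
  simpa [add_comm] using h

lemma sq_sum_le_two_mul_weightedSqSum (γ : ℕ → ℝ) (n : ℕ) :
    (∑ i ∈ range n, γ i) ^ 2 ≤ 2 * weightedSqSum γ n := by
  calc (∑ i ∈ range n, γ i) ^ 2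
        = (∑ i ∈ range n, ((i : ℝ) + 1)⁻¹ * (((i : ℝ) + 1) * γ i)) ^ 2 := by
        simp only [inv_mul_cancel_left₀ (Nat.cast_add_one_ne_zero (R := ℝ) _)]
    _ ≤ (∑ i ∈ range n, (((i : ℝ) + 1)⁻¹) ^ 2) * ∑ i ∈ range n, (((i : ℝ) + 1) * γ i) ^ 2 :=
        sum_mul_sq_le_sq_mul_sq _ _ _
    _ ≤ 2 * weightedSqSum γ n := by
        simp only [inv_pow, mul_pow]
        exact mul_le_mul_of_nonneg_right (sum_range_inv_succ_sq_le_two n)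
          (weightedSqSum_nonneg γ n)

lemma le_six_mul_add_sqrt_of_sq_le {a : ℝ} {r γ : ℕ → ℝ} (ha : 0 ≤ a) (hr : ∀ j, 0 ≤ r j)
    (hγ : ∀ i, 0 ≤ γ i)
    (h : ∀ j, r j ^ 2 ≤ 2 * a * r j + weightedSqSum γ j + ∑ i ∈ range j, 2 * γ i * r (i + 1))
    (j : ℕ) : r j ≤ 6 * (a + √(weightedSqSum γ j)) := by
  obtain ⟨m, hm, hmax⟩ := exists_max_image (range (j + 1)) r nonempty_range_add_one
  have hmj : m ≤ j := Nat.lt_succ_iff.1 (mem_range.1 hm)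
  set s := √(weightedSqSum γ j)
  have hs : s ^ 2 = weightedSqSum γ j := Real.sq_sqrt (weightedSqSum_nonneg γ j)
  have hΓ : ∑ i ∈ range j, γ i ≤ 2 * s := by
    have := sq_sum_le_two_mul_weightedSqSum γ j
    nlinarith [Real.sqrt_nonneg (weightedSqSum γ j)]
  have hsum : ∑ i ∈ range m, 2 * γ i * r (i + 1) ≤ 2 * r m * ∑ i ∈ range j, γ i := by
    calc ∑ i ∈ range m, 2 * γ i * r (i + 1) ≤ ∑ i ∈ range m, 2 * r m * γ i := by
          refine sum_le_sum fun i hi ↦ ?_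
          have : r (i + 1) ≤ r m := hmax _ (mem_range.2 (by simp at hi; omega))
          nlinarith [hγ i]
      _ ≤ ∑ i ∈ range j, 2 * r m * γ i :=
          sum_le_sum_of_subset_of_nonneg (range_subset_range.2 hmj)
            fun i _ _ ↦ mul_nonneg (by linarith [hr m]) (hγ i)
      _ = 2 * r m * ∑ i ∈ range j, γ i := by rw [mul_sum]
  have hRsq : r m ^ 2 ≤ 2 * a * r m + s ^ 2 + 4 * s * r m := by
    have := h m
    have := weightedSqSum_mono γ hmj
    nlinarith [hr m]
  have hR : r m ≤ 6 * (a + s) := by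
    nlinarith [hr m, Real.sqrt_nonneg (weightedSqSum γ j)]
  exact (hmax j (self_mem_range_succ j)).trans hR

section Halpern

variable {Z : Type*} [NormedAddCommGroup Z] [InnerProductSpace ℝ Z]

def CocoerciveWith (β : ℝ) (G : Z → Z) : Prop :=
  ∀ z₁ z₂ : Z, ⟪G z₁ - G z₂, z₁ - z₂⟫ ≥ β * ‖G z₁ - G z₂‖ ^ 2

def IsInexactHalpern (L : ℝ) (z ztil : ℕ → Z) : Prop :=
  ∀ k : ℕ, z (k + 1) = (1 / ((k : ℝ) + 2)) • z 0 + (((k : ℝ) + 1) / ((k : ℝ) + 2)) • z k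
      - (((k : ℝ) + 1) / (L * ((k : ℝ) + 2))) • ztil k

def halpernPotential (L : ℝ) (G : Z → Z) (z : ℕ → Z) (k : ℕ) : ℝ :=
  k * (k + 1) * ‖G (z k)‖ ^ 2 + 2 * L * (k + 1) * ⟪G (z k), z k - z 0⟫

variable {L : ℝ} {G : Z → Z} {z ztil : ℕ → Z}

lemma CocoerciveWith.sq_norm_sub_le (hG : CocoerciveWith (1 / L) G)
    (hL : 0 < L) (z₁ z₂ : Z) : ‖G z₁ - G z₂‖ ^ 2 ≤ L * ⟪G z₁ - G z₂, z₁ - z₂⟫ := by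
  have h := hG z₁ z₂
  rw [ge_iff_le, one_div, inv_mul_le_iff₀ hL] at h
  exact h

lemma sq_residual_le_add_halpernPotential (hL : 0 < L) (hG : CocoerciveWith (1 / L) G)
    {zs : Z} (hzs : G zs = 0) (j : ℕ) :
    (((j : ℝ) + 1) * ‖G (z j)‖) ^ 2 ≤
      2 * (L * ‖z 0 - zs‖) * (((j : ℝ) + 1) * ‖G (z j)‖) + halpernPotential L G z j := by
  have hco : ‖G (z j)‖ ^ 2 ≤ L * ⟪G (z j), z j - zs⟫ := by
    simpa [hzs] using hG.sq_norm_sub_le hL (z j) zs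
  have hsplit : ⟪G (z j), z j - z 0⟫ = ⟪G (z j), z j - zs⟫ - ⟪G (z j), z 0 - zs⟫ := by
    rw [← inner_sub_right, sub_sub_sub_cancel_right]
  have hcs : ⟪G (z j), z 0 - zs⟫ ≤ ‖G (z j)‖ * ‖z 0 - zs‖ := real_inner_le_norm _ _
  unfold halpernPotential
  rw [hsplit]
  linear_combination (2 * ((j : ℝ) + 1)) * hco + (2 * L * ((j : ℝ) + 1)) * hcs
    + ((j : ℝ) + 1) * sq_nonneg ‖G (z j)‖

namespace IsInexactHalpern

lemma smul_sub_anchor (h : IsInexactHalpern L z ztil) (hL : L ≠ 0) (k : ℕ) :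
    (L * ((k : ℝ) + 2)) • (z (k + 1) - z 0) =
      (L * ((k : ℝ) + 1)) • (z k - z 0) - ((k : ℝ) + 1) • ztil k := by
  have : (k : ℝ) + 2 ≠ 0 := by positivity
  rw [h k]
  match_scalars <;> field_simp
  ring

lemma smul_sub_prev (h : IsInexactHalpern L z ztil) (hL : L ≠ 0) (k : ℕ) :
    (L * ((k : ℝ) + 2)) • (z (k + 1) - z k) = -(L • (z k - z 0) + ((k : ℝ) + 1) • ztil k) := by
  have : (k : ℝ) + 2 ≠ 0 := by positivity
  rw [h k]
  match_scalars <;> field_simp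
  ring

lemma halpernPotential_succ_le (h : IsInexactHalpern L z ztil) (hL : 0 < L)
    (hG : CocoerciveWith (1 / L) G) {k : ℕ} {γ : ℝ} (hin : ‖G (z k) - ztil k‖ ≤ γ) :
    halpernPotential L G z (k + 1) ≤ halpernPotential L G z k + ((k : ℝ) + 1) ^ 2 * γ ^ 2
      + 2 * ((k : ℝ) + 1) * γ * ‖G (z (k + 1))‖ := by
  unfold halpernPotential
  push_cast
  set g := G (z k)
  set g' := G (z (k + 1))
  set e := ztil k - g
  set d := g' - g
  have hzt : ztil k = g + e := by simp [e]
  have he : ‖e‖ ≤ γ := by rwa [norm_sub_rev]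
  have hco : ‖d‖ ^ 2 ≤ L * ⟪d, z (k + 1) - z k⟫ := hG.sq_norm_sub_le hL (z (k + 1)) (z k)
  have hprev : L * ((k : ℝ) + 2) * ⟪d, z (k + 1) - z k⟫
      = -(L * ⟪d, z k - z 0⟫ + ((k : ℝ) + 1) * (⟪d, g⟫ + ⟪d, e⟫)) := by
    rw [← real_inner_smul_right, h.smul_sub_prev hL.ne' k, hzt, inner_neg_right, inner_add_right,
      real_inner_smul_right, real_inner_smul_right, inner_add_right]
  have hanchor : L * ((k : ℝ) + 2) * ⟪g', z (k + 1) - z 0⟫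
      = L * ((k : ℝ) + 1) * ⟪g', z k - z 0⟫ - ((k : ℝ) + 1) * (⟪g', g⟫ + ⟪g', e⟫) := by
    rw [← real_inner_smul_right, h.smul_sub_anchor hL.ne' k, hzt, inner_sub_right,
      real_inner_smul_right, real_inner_smul_right, inner_add_right]
  have hde : -⟪d, e⟫ ≤ ‖d‖ * γ := by
    nlinarith [neg_le_abs ⟪d, e⟫, abs_real_inner_le_norm d e, norm_nonneg d]
  have hge : -⟪g', e⟫ ≤ ‖g'‖ * γ := by
    nlinarith [neg_le_abs ⟪g', e⟫, abs_real_inner_le_norm g' e, norm_nonneg g']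
  have hd : ‖d‖ ^ 2 = ‖g'‖ ^ 2 - 2 * ⟪g', g⟫ + ‖g‖ ^ 2 := norm_sub_sq_real g' g
  have hdu : ⟪d, z k - z 0⟫ = ⟪g', z k - z 0⟫ - ⟪g, z k - z 0⟫ := inner_sub_left _ _ _
  have hdg : ⟪d, g⟫ = ⟪g', g⟫ - ‖g‖ ^ 2 := by rw [inner_sub_left, real_inner_self_eq_norm_sq]
  -- Co-coercivity weighted by `2 (k + 1) (k + 2)` cancels every term involving the iterates;
  -- the error terms are then absorbed by Cauchy–Schwarz and by completing the square.
  linear_combination (2 * ((k : ℝ) + 1) * ((k : ℝ) + 2)) * hco + 2 * ((k : ℝ) + 1) * hprev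
    + 2 * hanchor + (2 * ((k : ℝ) + 1) ^ 2) * hde + (2 * ((k : ℝ) + 1)) * hge
    + ((k : ℝ) + 1) ^ 2 * sq_nonneg (‖d‖ - γ) + ((k : ℝ) + 1) * sq_nonneg ‖d‖
    - 2 * L * ((k : ℝ) + 1) * hdu - 2 * ((k : ℝ) + 1) ^ 2 * hdg
    - ((k : ℝ) + 1) * ((k : ℝ) + 2) * hd

lemma halpernPotential_le_weightedSqSum_add_sum (h : IsInexactHalpern L z ztil) (hL : 0 < L)
    (hG : CocoerciveWith (1 / L) G) {γ : ℕ → ℝ} (hin : ∀ k, ‖G (z k) - ztil k‖ ≤ γ k) (j : ℕ) :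
    halpernPotential L G z j ≤ weightedSqSum γ j +
      ∑ i ∈ range j, 2 * γ i * ((((i + 1 : ℕ) : ℝ) + 1) * ‖G (z (i + 1))‖) := by
  induction j with
  | zero => simp [halpernPotential, weightedSqSum]
  | succ n ih =>
    have hstep := h.halpernPotential_succ_le hL hG (hin n)
    have hγ : 0 ≤ γ n := (norm_nonneg _).trans (hin n)
    rw [weightedSqSum] at ih ⊢
    rw [sum_range_succ, sum_range_succ]
    push_cast at ih ⊢
    nlinarith [mul_nonneg hγ (norm_nonneg (G (z (n + 1))))]

lemma residual_le (h : IsInexactHalpern L z ztil) (hL : 0 < L) (hG : CocoerciveWith (1 / L) G)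
    {γ : ℕ → ℝ} (hin : ∀ k, ‖G (z k) - ztil k‖ ≤ γ k) {zs : Z} (hzs : G zs = 0) (j : ℕ) :
    ((j : ℝ) + 1) * ‖G (z j)‖ ≤ 6 * (L * ‖z 0 - zs‖ + √(weightedSqSum γ j)) :=
  le_six_mul_add_sqrt_of_sq_le (r := fun j ↦ ((j : ℝ) + 1) * ‖G (z j)‖) (by positivity)
    (fun _ ↦ by positivity) (fun k ↦ (norm_nonneg _).trans (hin k))
    (fun j ↦ (sq_residual_le_add_halpernPotential hL hG hzs j).trans
      (by linarith [h.halpernPotential_le_weightedSqSum_add_sum hL hG hin j])) j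

lemma norm_sub_anchor_le (h : IsInexactHalpern L z ztil) (hL : 0 < L)
    (hG : CocoerciveWith (1 / L) G) {γ : ℕ → ℝ} (hin : ∀ k, ‖G (z k) - ztil k‖ ≤ γ k)
    {zs : Z} (hzs : G zs = 0) (j : ℕ) :
    L * ((j : ℝ) + 1) * ‖z j - z 0‖ ≤ j * (6 * (L * ‖z 0 - zs‖) + 7 * √(weightedSqSum γ j)) := by
  induction j with
  | zero => simp
  | succ n ih =>
    have hstep : L * ((n : ℝ) + 2) * ‖z (n + 1) - z 0‖
        ≤ L * ((n : ℝ) + 1) * ‖z n - z 0‖ + ((n : ℝ) + 1) * (‖G (z n)‖ + γ n) :=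
      calc L * ((n : ℝ) + 2) * ‖z (n + 1) - z 0‖
          = ‖(L * ((n : ℝ) + 1)) • (z n - z 0) - ((n : ℝ) + 1) • ztil n‖ := by
            rw [← h.smul_sub_anchor hL.ne', norm_smul_of_nonneg (by positivity)]
        _ ≤ L * ((n : ℝ) + 1) * ‖z n - z 0‖ + ((n : ℝ) + 1) * ‖ztil n‖ := by
            grw [norm_sub_le, norm_smul_of_nonneg (by positivity),
              norm_smul_of_nonneg (by positivity)]
        _ ≤ _ := by grw [norm_le_norm_add_const_of_dist_le
              (by rw [dist_comm, dist_eq_norm]; exact hin n : dist (ztil n) (G (z n)) ≤ γ n)]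
    have hres := h.residual_le hL hG hin hzs n
    have herr := mul_le_sqrt_weightedSqSum γ n
    have hmono := Real.sqrt_le_sqrt (weightedSqSum_mono γ (n.le_add_right 1))
    push_cast
    nlinarith [Nat.cast_nonneg (α := ℝ) n]

lemma norm_succ_sub_le (h : IsInexactHalpern L z ztil) (hL : 0 < L)
    (hG : CocoerciveWith (1 / L) G) {γ : ℕ → ℝ} (hin : ∀ k, ‖G (z k) - ztil k‖ ≤ γ k)
    {zs : Z} (hzs : G zs = 0) (k : ℕ) :
    L * ((k : ℝ) + 2) * ‖z (k + 1) - z k‖ ≤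
      12 * (L * ‖z 0 - zs‖) + 14 * √(weightedSqSum γ (k + 1)) := by
  have hstep : L * ((k : ℝ) + 2) * ‖z (k + 1) - z k‖
      ≤ L * ‖z k - z 0‖ + ((k : ℝ) + 1) * (‖G (z k)‖ + γ k) :=
    calc L * ((k : ℝ) + 2) * ‖z (k + 1) - z k‖
        = ‖L • (z k - z 0) + ((k : ℝ) + 1) • ztil k‖ := by
          rw [← norm_neg (L • _ + _), ← h.smul_sub_prev hL.ne',
            norm_smul_of_nonneg (by positivity)]
      _ ≤ L * ‖z k - z 0‖ + ((k : ℝ) + 1) * ‖ztil k‖ := by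
          grw [norm_add_le, norm_smul_of_nonneg hL.le, norm_smul_of_nonneg (by positivity)]
      _ ≤ _ := by grw [norm_le_norm_add_const_of_dist_le
              (by rw [dist_comm, dist_eq_norm]; exact hin k : dist (ztil k) (G (z k)) ≤ γ k)]
  have hanchor := h.norm_sub_anchor_le hL hG hin hzs k
  have hres := h.residual_le hL hG hin hzs k
  have herr := mul_le_sqrt_weightedSqSum γ k
  have hmono := Real.sqrt_le_sqrt (weightedSqSum_mono γ (k.le_add_right 1))
  have hk : (0 : ℝ) ≤ k := k.cast_nonneg
  refine le_of_mul_le_mul_left ?_ (by positivity : (0 : ℝ) < (k : ℝ) + 1)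
  have := mul_le_mul_of_nonneg_left hstep (by positivity : (0 : ℝ) ≤ (k : ℝ) + 1)
  have := mul_le_mul_of_nonneg_left hres (by positivity : (0 : ℝ) ≤ (k : ℝ) + 1)
  have := mul_le_mul_of_nonneg_left herr (by positivity : (0 : ℝ) ≤ (k : ℝ) + 1)
  have := mul_le_mul_of_nonneg_left hmono (by positivity : (0 : ℝ) ≤ 13 * (k : ℝ) + 6)
  have : 0 ≤ L * ‖z 0 - zs‖ := by positivity
  have : 0 ≤ √(weightedSqSum γ (k + 1)) := Real.sqrt_nonneg _
  nlinarith

end IsInexactHalpern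

end Halpern

theorem stmt_8_general {Z : Type*} [NormedAddCommGroup Z] [InnerProductSpace ℝ Z]
    (L : ℝ) (hL : 0 < L) (G : Z → Z)
    (hG : ∀ z₁ z₂ : Z, ⟪G z₁ - G z₂, z₁ - z₂⟫ ≥ (1 / L) * ‖G z₁ - G z₂‖ ^ 2)
    (z ztil : ℕ → Z) (γ : ℕ → ℝ)
    (hrec : ∀ k : ℕ, z (k + 1) = (1 / ((k : ℝ) + 2)) • z 0 + (((k : ℝ) + 1) / ((k : ℝ) + 2)) • z k
      - (((k : ℝ) + 1) / (L * ((k : ℝ) + 2))) • ztil k)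
    (hin : ∀ k : ℕ, ‖G (z k) - ztil k‖ ≤ γ k)
    (zs : Z) (hzs : G zs = 0) :
    ∀ k : ℕ, ‖z (k + 1) - z k‖ ^ 2 ≤
      8 * (7 * L * ‖z 0 - zs‖ +
          11 * Real.sqrt (∑ i ∈ Finset.range (k + 1), ((i : ℝ) + 1) ^ 2 * γ i ^ 2)) ^ 2 /
        (L ^ 2 * (((k : ℝ) + 1) * ((k : ℝ) + 2))) := by
  intro k
  have hstep := IsInexactHalpern.norm_succ_sub_le hrec hL hG hin hzs k
  set a := L * ‖z 0 - zs‖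
  set s := √(weightedSqSum γ (k + 1))
  have ha : 0 ≤ a := by positivity
  have hs : 0 ≤ s := Real.sqrt_nonneg _
  rw [le_div_iff₀ (by positivity)]
  calc ‖z (k + 1) - z k‖ ^ 2 * (L ^ 2 * (((k : ℝ) + 1) * ((k : ℝ) + 2)))
      ≤ (L * ((k : ℝ) + 2) * ‖z (k + 1) - z k‖) ^ 2 := by
        nlinarith [mul_nonneg (sq_nonneg (L * ‖z (k + 1) - z k‖)) (k.cast_nonneg (α := ℝ))]
    _ ≤ (12 * a + 14 * s) ^ 2 := pow_le_pow_left₀ (by positivity) hstep 2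
    _ ≤ 8 * (7 * a + 11 * s) ^ 2 := by nlinarith [mul_nonneg ha hs]
    _ = _ := by rw [mul_assoc 7 L]; rfl

theorem stmt_8 {Z : Type*} [NormedAddCommGroup Z] [InnerProductSpace ℝ Z]
    [FiniteDimensional ℝ Z]
    (L : ℝ) (hL : 0 < L) (G : Z → Z)
    (hG : ∀ z₁ z₂ : Z, ⟪G z₁ - G z₂, z₁ - z₂⟫ ≥ (1 / L) * ‖G z₁ - G z₂‖ ^ 2)
    (z ztil : ℕ → Z) (γ : ℕ → ℝ) (hγ : ∀ k, 0 ≤ γ k)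
    (hrec : ∀ k : ℕ, z (k + 1) = (1 / ((k : ℝ) + 2)) • z 0 + (((k : ℝ) + 1) / ((k : ℝ) + 2)) • z k
      - (((k : ℝ) + 1) / (L * ((k : ℝ) + 2))) • ztil k)
    (hin : ∀ k : ℕ, ‖G (z k) - ztil k‖ ≤ γ k)
    (zs : Z) (hzs : G zs = 0) :
    ∀ k : ℕ, ‖z (k + 1) - z k‖ ^ 2 ≤
      8 * (7 * L * ‖z 0 - zs‖ +
          11 * Real.sqrt (∑ i ∈ Finset.range (k + 1), ((i : ℝ) + 1) ^ 2 * γ i ^ 2)) ^ 2 /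
        (L ^ 2 * (((k : ℝ) + 1) * ((k : ℝ) + 2))) :=
  stmt_8_general L hL G hG z ztil γ hrec hin zs hzs
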